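/- Let L : M_n(ℂ) → M_n(ℂ) be a Liouvillian. Then the eigenvalue 0 of L has no Jordan block (its algebraic multiplicity equals its geometric multiplicity): ker(L ∘ L) = ker(L), and more generally ker(L^k) = ker(L) for every integer k ≥ 1. -/

import Mathlib

/-!
The trace pairing `⟨X, ρ⟩ = tr (X ρ)` makes `L` the transpose of the Heisenberg-picture generator
`L† X = i [H, X] + ∑ (Γᴴ X Γ - ½ {ΓᴴΓ, X})`, so it suffices to show `ker L† ∩ range L† = 0`. Then
the two subspaces are complementary, and any `σ = L ρ` with `L σ = 0` is orthogonal to `ker L†`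
(as `⟨X, L ρ⟩ = ⟨L† X, ρ⟩`) and to `range L†` (as `⟨L† X, σ⟩ = ⟨X, L σ⟩`), hence `σ = 0`.

Since `L†` commutes with `ᴴ`, it suffices to treat Hermitian `A`, `Y` with `L† A = Y`, `L† Y = 0`.
`L†` is unital and satisfies a maximum principle: if `v` is a top eigenvector of a Hermitian `Z`
with eigenvalue `r`, then `re ⟨v, L† Z v⟩ ≤ 0`, because `L† Z = -L† (r - Z)` and only the jump
terms `∑ ⟨Γ v, (r - Z) Γ v⟩ ≥ 0` survive. Applied to `Z = A + t Y`, whose image is `Y`, this bounds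
the top eigenvalue of `A + t Y` by that of `A` for all `t ≥ 0`, which forces `Y ≤ 0`; symmetrically
`Y ≥ 0`.
-/

open Matrix Complex
open scoped MatrixOrder ComplexOrder ComplexStarModule

namespace Matrix

section TraceForm

variable (R m : Type*) [CommSemiring R] [Fintype m]

noncomputable def traceForm : Matrix m m R →ₗ[R] Matrix m m R →ₗ[R] R :=
  (LinearMap.mul R (Matrix m m R)).compr₂ (traceLinearMap m R R)

variable {R m}

@[simp]
lemma traceForm_apply (X Y : Matrix m m R) : traceForm R m X Y = trace (X * Y) := rfl

lemma separatingRight_traceForm : (traceForm R m).SeparatingRight := fun Y hY ↦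
  ext_iff_trace_mul_left.mpr fun X ↦ by simpa using hY X

lemma isAdjointPair_traceForm_mulLeft (A : Matrix m m R) :
    LinearMap.IsAdjointPair (traceForm R m) (traceForm R m)
      (LinearMap.mulLeft R A) (LinearMap.mulRight R A) := fun X Y ↦ by
  simp only [traceForm_apply, LinearMap.mulLeft_apply, LinearMap.mulRight_apply]
  rw [← Matrix.mul_assoc, trace_mul_cycle X Y A]

lemma isAdjointPair_traceForm_mulRight (A : Matrix m m R) :
    LinearMap.IsAdjointPair (traceForm R m) (traceForm R m)
      (LinearMap.mulRight R A) (LinearMap.mulLeft R A) := fun X Y ↦ by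
  simp [Matrix.mul_assoc]

end TraceForm

variable {m 𝕜 : Type*} [Fintype m] [DecidableEq m] [RCLike 𝕜]

lemma IsHermitian.exists_top_eigenvector [Nonempty m] {Z : Matrix m m 𝕜} (hZ : Z.IsHermitian) :
    ∃ (r : ℝ) (v : m → 𝕜), star v ⬝ᵥ v = 1 ∧ Z *ᵥ v = (r : 𝕜) • v ∧ Z ≤ algebraMap ℝ _ r := by
  obtain ⟨i, -, hi⟩ := Finset.exists_max_image Finset.univ hZ.eigenvalues Finset.univ_nonempty
  refine ⟨hZ.eigenvalues i, hZ.eigenvectorBasis i, ?_, ?_, ?_⟩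
  · rw [dotProduct_comm, ← EuclideanSpace.inner_eq_star_dotProduct, inner_self_eq_norm_sq_to_K,
      hZ.eigenvectorBasis.orthonormal.1 i]
    simp
  · rw [hZ.mulVec_eigenvectorBasis, RCLike.real_smul_eq_coe_smul (K := 𝕜)]
  · refine le_algebraMap_of_spectrum_le fun x hx ↦ ?_
    obtain ⟨j, rfl⟩ := hZ.spectrum_real_eq_range_eigenvalues ▸ hx
    exact hi j (Finset.mem_univ j)

lemma re_dotProduct_mulVec_le_of_le_algebraMap {Z : Matrix m m 𝕜} {r : ℝ}
    (hZ : Z ≤ algebraMap ℝ _ r) (w : m → 𝕜) :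
    RCLike.re (star w ⬝ᵥ (Z *ᵥ w)) ≤ r * RCLike.re (star w ⬝ᵥ w) := by
  have h := (le_iff.mp hZ).re_dotProduct_nonneg w
  rw [Algebra.algebraMap_eq_smul_one, sub_mulVec, smul_mulVec, one_mulVec, dotProduct_sub,
    dotProduct_smul, map_sub, RCLike.smul_re] at h
  linarith

end Matrix

namespace LinearMap

lemma IsAdjointPair.sum {R M M₁ M₃ ι : Type*} [CommSemiring R] [AddCommMonoid M] [Module R M]
    [AddCommMonoid M₁] [Module R M₁] [AddCommMonoid M₃] [Module R M₃] {I : R →+* R}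
    {B : M →ₗ[R] M →ₛₗ[I] M₃} {B' : M₁ →ₗ[R] M₁ →ₛₗ[I] M₃} (s : Finset ι)
    {f : ι → M →ₗ[R] M₁} {g : ι → M₁ →ₗ[R] M} (h : ∀ i ∈ s, IsAdjointPair B B' (f i) (g i)) :
    IsAdjointPair B B' ⇑(∑ i ∈ s, f i) ⇑(∑ i ∈ s, g i) := fun x y ↦ by
  simp only [map_sum, sum_apply]
  exact Finset.sum_congr rfl fun i hi ↦ h i hi x y

lemma isCompl_ker_range_of_disjoint {K V : Type*} [DivisionRing K] [AddCommGroup V] [Module K V]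
    [FiniteDimensional K V] {f : Module.End K V} (h : Disjoint (ker f) (range f)) :
    IsCompl (ker f) (range f) :=
  (Submodule.isCompl_iff_disjoint _ _ (by rw [add_comm, finrank_range_add_finrank_ker])).mpr h

lemma ker_comp_self_le_ker_of_isAdjointPair {R M M₃ : Type*} [CommSemiring R] [AddCommMonoid M]
    [Module R M] [AddCommMonoid M₃] [Module R M₃] {B : M →ₗ[R] M →ₗ[R] M₃}
    (hB : B.SeparatingRight) {f g : Module.End R M} (hfg : IsAdjointPair B B f g)
    (hf : IsCompl (ker f) (range f)) : ker (g ∘ₗ g) ≤ ker g := by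
  intro y (hy : g (g y) = 0)
  refine hB _ fun x ↦ ?_
  have hx : x ∈ ker f ⊔ range f := hf.sup_eq_top ▸ Submodule.mem_top
  obtain ⟨x₀, hx₀, _, ⟨x₁, rfl⟩, rfl⟩ := Submodule.mem_sup.mp hx
  rw [map_add₂, ← hfg, hfg x₁, mem_ker.mp hx₀, hy, map_zero₂, map_zero, add_zero]

lemma map_realPart_of_map_star {A : Type*} [AddCommGroup A] [Module ℂ A] [StarAddMonoid A]
    [StarModule ℂ A] {f : Module.End ℂ A} (hf : ∀ x, f (star x) = star (f x)) (x : A) :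
    f ↑(ℜ x) = ↑(ℜ (f x)) := by
  simp [realPart_apply_coe, ← Complex.coe_smul, hf]

end LinearMap

open LinearMap (IsAdjointPair mulLeft mulRight mulLeft_apply mulRight_apply)

variable {m ι : Type*} [Fintype m] [Fintype ι]

noncomputable def lindbladian (H : Matrix m m ℂ) (Γ : ι → Matrix m m ℂ) :
    Module.End ℂ (Matrix m m ℂ) :=
  I • (mulRight ℂ H - mulLeft ℂ H) + ∑ μ, (mulLeft ℂ (Γ μ) ∘ₗ mulRight ℂ (Γ μ)ᴴ -
    (2⁻¹ : ℂ) • (mulLeft ℂ ((Γ μ)ᴴ * Γ μ) + mulRight ℂ ((Γ μ)ᴴ * Γ μ)))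

noncomputable def lindbladianDual (H : Matrix m m ℂ) (Γ : ι → Matrix m m ℂ) :
    Module.End ℂ (Matrix m m ℂ) :=
  I • (mulLeft ℂ H - mulRight ℂ H) + ∑ μ, (mulLeft ℂ (Γ μ)ᴴ ∘ₗ mulRight ℂ (Γ μ) -
    (2⁻¹ : ℂ) • (mulRight ℂ ((Γ μ)ᴴ * Γ μ) + mulLeft ℂ ((Γ μ)ᴴ * Γ μ)))

section Lindbladian

variable (H : Matrix m m ℂ) (Γ : ι → Matrix m m ℂ)

lemma lindbladian_apply (ρ : Matrix m m ℂ) :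
    lindbladian H Γ ρ = (-I) • (H * ρ - ρ * H) +
      ∑ μ, (Γ μ * ρ * (Γ μ)ᴴ - (2⁻¹ : ℂ) • ((Γ μ)ᴴ * Γ μ * ρ + ρ * ((Γ μ)ᴴ * Γ μ))) := by
  simp only [lindbladian, LinearMap.add_apply, LinearMap.smul_apply, LinearMap.sub_apply,
    LinearMap.sum_apply, LinearMap.comp_apply, mulLeft_apply, mulRight_apply, Matrix.mul_assoc]
  module

lemma lindbladianDual_apply (X : Matrix m m ℂ) :
    lindbladianDual H Γ X = I • (H * X - X * H) +
      ∑ μ, ((Γ μ)ᴴ * X * Γ μ - (2⁻¹ : ℂ) • (X * ((Γ μ)ᴴ * Γ μ) + (Γ μ)ᴴ * Γ μ * X)) := by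
  simp [lindbladianDual, LinearMap.sum_apply, Matrix.mul_assoc]

lemma isAdjointPair_lindbladianDual :
    IsAdjointPair (traceForm ℂ m) (traceForm ℂ m) (lindbladianDual H Γ) (lindbladian H Γ) :=
  (((isAdjointPair_traceForm_mulLeft H).sub (isAdjointPair_traceForm_mulRight H)).smul I).add
    (IsAdjointPair.sum _ fun μ _ ↦
      ((isAdjointPair_traceForm_mulRight (Γ μ)).comp (isAdjointPair_traceForm_mulLeft (Γ μ)ᴴ)).sub
        (((isAdjointPair_traceForm_mulRight _).add (isAdjointPair_traceForm_mulLeft _)).smul _))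

lemma lindbladianDual_one [DecidableEq m] : lindbladianDual H Γ 1 = 0 := by
  simp [lindbladianDual_apply, ← two_smul ℂ, smul_smul]

lemma lindbladianDual_conjTranspose (hH : H.IsHermitian) (X : Matrix m m ℂ) :
    lindbladianDual H Γ Xᴴ = (lindbladianDual H Γ X)ᴴ := by
  simp [lindbladianDual_apply, conjTranspose_sum, hH.eq, Matrix.mul_assoc, add_comm,
    sub_eq_add_neg]

lemma star_dotProduct_lindbladianDual_mulVec_of_mulVec_eq_zero {P : Matrix m m ℂ}
    (hP : P.IsHermitian) {v : m → ℂ} (hPv : P *ᵥ v = 0) :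
    star v ⬝ᵥ (lindbladianDual H Γ P *ᵥ v) = ∑ μ, star (Γ μ *ᵥ v) ⬝ᵥ (P *ᵥ (Γ μ *ᵥ v)) := by
  have hvP : star v ᵥ* P = 0 := by rw [← hP.eq, ← star_mulVec, hPv, star_zero]
  have hleft (A : Matrix m m ℂ) : star v ⬝ᵥ ((A * P) *ᵥ v) = 0 := by
    rw [← mulVec_mulVec, hPv, mulVec_zero, dotProduct_zero]
  have hright (A : Matrix m m ℂ) : star v ⬝ᵥ ((P * A) *ᵥ v) = 0 := by
    rw [← mulVec_mulVec, dotProduct_mulVec, hvP, zero_dotProduct]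
  have hjump (A : Matrix m m ℂ) :
      star v ⬝ᵥ ((Aᴴ * P * A) *ᵥ v) = star (A *ᵥ v) ⬝ᵥ (P *ᵥ (A *ᵥ v)) := by
    rw [← mulVec_mulVec, ← mulVec_mulVec, dotProduct_mulVec, star_mulVec]
  simp only [lindbladianDual_apply, add_mulVec, sub_mulVec, smul_mulVec, sum_mulVec,
    dotProduct_add, dotProduct_sub, dotProduct_smul, dotProduct_sum, hleft, hright, hjump]
  simp

variable [DecidableEq m]

lemma re_dotProduct_lindbladianDual_mulVec_nonpos {Z : Matrix m m ℂ} {r : ℝ}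
    (hZ : Z ≤ algebraMap ℝ _ r) {v : m → ℂ} (hv : Z *ᵥ v = (r : ℂ) • v) :
    RCLike.re (star v ⬝ᵥ (lindbladianDual H Γ Z *ᵥ v)) ≤ 0 := by
  set P := algebraMap ℝ _ r - Z
  have hP : P.PosSemidef := le_iff.mp hZ
  have hPv : P *ᵥ v = 0 := by
    rw [sub_mulVec, hv, Algebra.algebraMap_eq_smul_one, smul_mulVec, one_mulVec, sub_eq_zero,
      Complex.coe_smul]
  have hKP : lindbladianDual H Γ P = -lindbladianDual H Γ Z := by
    rw [map_sub, Algebra.algebraMap_eq_smul_one, LinearMap.map_smul_of_tower,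
      lindbladianDual_one, smul_zero, zero_sub]
  have hsum := star_dotProduct_lindbladianDual_mulVec_of_mulVec_eq_zero H Γ hP.isHermitian hPv
  rw [hKP, neg_mulVec, dotProduct_neg, neg_eq_iff_eq_neg] at hsum
  rw [hsum, map_neg, neg_nonpos, map_sum]
  exact Finset.sum_nonneg fun μ _ ↦ hP.re_dotProduct_nonneg _

lemma re_dotProduct_mulVec_nonpos_of_lindbladianDual_eq {A Y : Matrix m m ℂ}
    (hA : A.IsHermitian) (hY : Y.IsHermitian) (hAY : lindbladianDual H Γ A = Y)
    (hY0 : lindbladianDual H Γ Y = 0) (w : m → ℂ) : RCLike.re (star w ⬝ᵥ (Y *ᵥ w)) ≤ 0 := by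
  rcases isEmpty_or_nonempty m with hm | hm
  · simp [Subsingleton.elim w 0]
  obtain ⟨a, -, -, -, hAa⟩ := hA.exists_top_eigenvector
  have hw : 0 ≤ RCLike.re (star w ⬝ᵥ w) := (RCLike.nonneg_iff.mp (dotProduct_star_self_nonneg w)).1
  have hgrowth : ∀ t : ℝ, 0 ≤ t →
      RCLike.re (star w ⬝ᵥ (A *ᵥ w)) + t * RCLike.re (star w ⬝ᵥ (Y *ᵥ w)) ≤
        a * RCLike.re (star w ⬝ᵥ w) := by
    intro t ht
    have hquad (u : m → ℂ) : RCLike.re (star u ⬝ᵥ ((A + t • Y) *ᵥ u)) =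
        RCLike.re (star u ⬝ᵥ (A *ᵥ u)) + t * RCLike.re (star u ⬝ᵥ (Y *ᵥ u)) := by
      rw [add_mulVec, smul_mulVec, dotProduct_add, dotProduct_smul, map_add, RCLike.smul_re]
    obtain ⟨r, v, hvv, hv, hZr⟩ := (hA.add (hY.smul (IsSelfAdjoint.all t))).exists_top_eigenvector
    have hYv : RCLike.re (star v ⬝ᵥ (Y *ᵥ v)) ≤ 0 := by
      simpa [hAY, hY0] using re_dotProduct_lindbladianDual_mulVec_nonpos H Γ hZr hv
    have hAv : RCLike.re (star v ⬝ᵥ (A *ᵥ v)) ≤ a := by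
      simpa [hvv] using re_dotProduct_mulVec_le_of_le_algebraMap hAa v
    have hra : r ≤ a := calc
      r = RCLike.re (star v ⬝ᵥ ((A + t • Y) *ᵥ v)) := by simp [hv, dotProduct_smul, hvv]
      _ ≤ a := by linarith [hquad v, mul_nonpos_of_nonneg_of_nonpos ht hYv]
    calc RCLike.re (star w ⬝ᵥ (A *ᵥ w)) + t * RCLike.re (star w ⬝ᵥ (Y *ᵥ w))
        = RCLike.re (star w ⬝ᵥ ((A + t • Y) *ᵥ w)) := (hquad w).symm
      _ ≤ r * RCLike.re (star w ⬝ᵥ w) := re_dotProduct_mulVec_le_of_le_algebraMap hZr w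
      _ ≤ a * RCLike.re (star w ⬝ᵥ w) := mul_le_mul_of_nonneg_right hra hw
  by_contra! hpos
  have := hgrowth ((a * RCLike.re (star w ⬝ᵥ w) - RCLike.re (star w ⬝ᵥ (A *ᵥ w)) + 1) /
    RCLike.re (star w ⬝ᵥ (Y *ᵥ w)))
    (div_nonneg (by linarith [re_dotProduct_mulVec_le_of_le_algebraMap hAa w]) hpos.le)
  rw [div_mul_cancel₀ _ hpos.ne'] at this
  linarith

lemma eq_zero_of_lindbladianDual_eq_of_isHermitian {A Y : Matrix m m ℂ}
    (hA : A.IsHermitian) (hY : Y.IsHermitian) (hAY : lindbladianDual H Γ A = Y)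
    (hY0 : lindbladianDual H Γ Y = 0) : Y = 0 := by
  refine hY.eigenvalues_eq_zero_iff.mp (funext fun i ↦ le_antisymm ?_ ?_) <;>
    rw [hY.eigenvalues_eq]
  · exact re_dotProduct_mulVec_nonpos_of_lindbladianDual_eq H Γ hA hY hAY hY0 _
  · simpa [neg_mulVec] using re_dotProduct_mulVec_nonpos_of_lindbladianDual_eq H Γ hA.neg hY.neg
      (by rw [map_neg, hAY]) (by rw [map_neg, hY0, neg_zero]) (hY.eigenvectorBasis i)

lemma disjoint_ker_range_lindbladianDual (hH : H.IsHermitian) :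
    Disjoint (LinearMap.ker (lindbladianDual H Γ)) (LinearMap.range (lindbladianDual H Γ)) := by
  set K := lindbladianDual H Γ
  have hre : ∀ X, K ↑(ℜ X) = ↑(ℜ (K X)) :=
    LinearMap.map_realPart_of_map_star (lindbladianDual_conjTranspose H Γ hH)
  have hreal : ∀ X, K (K X) = 0 → ℜ (K X) = 0 := fun X hX ↦ Subtype.ext <|
    eq_zero_of_lindbladianDual_eq_of_isHermitian H Γ (ℜ X).2 (ℜ (K X)).2 (hre X)
      (by rw [hre, hX, map_zero, ZeroMemClass.coe_zero])
  rw [Submodule.disjoint_def]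
  rintro _ hY ⟨X, rfl⟩
  refine ComplexStarModule.ext ((hreal X hY).trans (map_zero _).symm) ?_
  have hIX := hreal (I • X) (by rw [map_smul, map_smul, hY, smul_zero])
  rw [map_smul, realPart_I_smul, neg_eq_zero] at hIX
  rw [hIX, map_zero]

end Lindbladian

theorem liouvillian_zero_eigenvalue_no_jordan_block (n : ℕ)
    (H : Matrix (Fin n) (Fin n) ℂ) (hH : H.IsHermitian)
    (F : Type) [Fintype F] (Γ : F → Matrix (Fin n) (Fin n) ℂ)
    (L : Module.End ℂ (Matrix (Fin n) (Fin n) ℂ))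
    (hL : ∀ ρ : Matrix (Fin n) (Fin n) ℂ,
      L ρ = (-Complex.I) • (H * ρ - ρ * H) +
        ∑ μ : F, (Γ μ * ρ * (Γ μ)ᴴ -
          (2⁻¹ : ℂ) • ((Γ μ)ᴴ * Γ μ * ρ + ρ * ((Γ μ)ᴴ * Γ μ)))) :
    LinearMap.ker (L ∘ₗ L) = LinearMap.ker L ∧
      ∀ k : ℕ, 1 ≤ k → LinearMap.ker (L ^ k) = LinearMap.ker L := by
  have hLL : L = lindbladian H Γ :=
    LinearMap.ext fun ρ ↦ (hL ρ).trans (lindbladian_apply H Γ ρ).symm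
  have hker : LinearMap.ker (L ∘ₗ L) = LinearMap.ker L := by
    refine le_antisymm ?_ (LinearMap.ker_le_ker_comp _ _)
    rw [hLL]
    exact LinearMap.ker_comp_self_le_ker_of_isAdjointPair separatingRight_traceForm
      (isAdjointPair_lindbladianDual H Γ)
      (LinearMap.isCompl_ker_range_of_disjoint (disjoint_ker_range_lindbladianDual H Γ hH))
  have hker_sq : LinearMap.ker (L ^ 1) = LinearMap.ker (L ^ 2) := by
    rw [pow_one, sq, Module.End.mul_eq_comp, hker]
  refine ⟨hker, fun k hk ↦ ?_⟩
  obtain ⟨j, rfl⟩ := Nat.exists_eq_add_of_le hk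
  rw [← Module.End.ker_pow_constant hker_sq j, pow_one]
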